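/- (Theorem 3, deterministic robust counterpart for exponential perturbations) Let n ≥ 2, let ζ_1, …, ζ_n be independent real random variables where each ζ_j has the exponential distribution with rate λ_j > 0 (so E[ζ_j] = 1/λ_j). Let μ^{(0)}_1, …, μ^{(0)}_n, τ be real numbers, let μ_1, …, μ_n, x_1, …, x_n be real numbers with μ_j x_j > 0 for every j and with the ratios λ_1/(μ_1 x_1), …, λ_n/(μ_n x_n) pairwise distinct, let β ∈ (0,1), and assume τ − ∑_{j=1}^n μ^{(0)}_j x_j ≥ 0. Then the chance constraint Prob( ∑_{j=1}^n (μ^{(0)}_j + ζ_j μ_j) x_j ≥ τ ) ≥ β holds if and only if the deterministic constraint ( ∏_{j=1}^n λ_j ) · ∑_{k=1}^n (μ_k x_k)^{n−1} · ( exp( −λ_k (τ − ∑_{j=1}^n μ^{(0)}_j x_j) / (μ_k x_k) ) − 1 ) / ( −λ_k · ∏_{l=1, l≠k}^n ( μ_k x_k λ_l − μ_l x_l λ_k ) ) ≤ 1 − β holds. -/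

import Mathlib

open MeasureTheory ProbabilityTheory Real Set Finset
open scoped ENNReal NNReal


lemma lagrange_basis_sum_one {ι : Type*} [DecidableEq ι] {s : Finset ι} (hs : s.Nonempty)
    (r : ι → ℝ) (hinj : Set.InjOn r s) (x : ℝ) :
    ∑ k ∈ s, ∏ l ∈ s.erase k, (x - r l) / (r k - r l) = 1 := by
  have hdeg : (1 : Polynomial ℝ).degree < (s.card : ℕ) := by
    rw [Polynomial.degree_one]
    exact_mod_cast hs.card_pos
  have h := Lagrange.eq_interpolate (v := r) hinj hdeg
  have h2 := congrArg (Polynomial.eval x) h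
  simp only [Polynomial.eval_one, Lagrange.interpolate_apply, Lagrange.basis,
    Lagrange.basisDivisor, Polynomial.eval_finset_sum, Polynomial.eval_mul, Polynomial.eval_C,
    Polynomial.eval_prod, Polynomial.eval_sub, Polynomial.eval_X, one_mul] at h2
  rw [h2]
  refine Finset.sum_congr rfl fun k hk => Finset.prod_congr rfl fun l hl => ?_
  rw [div_eq_mul_inv, mul_comm]

lemma lagrange_c_mul {ι : Type*} [DecidableEq ι] {s : Finset ι} (hs : s.Nonempty)
    (r : ι → ℝ) (hinj : Set.InjOn r s) (x : ℝ) (hx : ∀ l ∈ s, r l ≠ x) :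
    ∑ k ∈ s, (∏ l ∈ s.erase k, r l / (r l - r k)) * (r k / (r k - x))
      = ∏ l ∈ s, r l / (r l - x) := by
  have key := lagrange_basis_sum_one hs r hinj x
  calc ∑ k ∈ s, (∏ l ∈ s.erase k, r l / (r l - r k)) * (r k / (r k - x))
      = ∑ k ∈ s, (∏ l ∈ s, r l / (r l - x)) * ∏ l ∈ s.erase k, (x - r l) / (r k - r l) := by
        refine Finset.sum_congr rfl fun k hk => ?_
        rw [← Finset.mul_prod_erase s (fun l => r l / (r l - x)) hk, mul_assoc,
          ← Finset.prod_mul_distrib]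
        have : ∏ l ∈ s.erase k, r l / (r l - x) * ((x - r l) / (r k - r l))
            = ∏ l ∈ s.erase k, r l / (r l - r k) := by
          refine Finset.prod_congr rfl fun l hl => ?_
          have hl' := Finset.mem_of_mem_erase hl
          have hlk : l ≠ k := Finset.ne_of_mem_erase hl
          have h1 : r l - x ≠ 0 := sub_ne_zero.2 (hx l hl')
          have h2 : r k - r l ≠ 0 := sub_ne_zero.2 fun h => hlk (hinj hl' hk h.symm)
          have h3 : r l - r k ≠ 0 := sub_ne_zero.2 fun h => hlk (hinj hl' hk h)
          field_simp
          ring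
        rw [this]
        ring
    _ = ∏ l ∈ s, r l / (r l - x) := by rw [← Finset.mul_sum, key, mul_one]


lemma expMeasure_eq' (r : ℝ) : expMeasure r = volume.withDensity (exponentialPDF r) := rfl

lemma expMeasure_Iic' {r : ℝ} (hr : 0 < r) (x : ℝ) :
    expMeasure r (Iic x) = ENNReal.ofReal (if 0 ≤ x then 1 - rexp (-(r * x)) else 0) := by
  rw [expMeasure_eq', withDensity_apply _ measurableSet_Iic,
    lintegral_exponentialPDF_eq_antiDeriv hr x]

lemma expMeasure_singleton' (r : ℝ) (x : ℝ) : expMeasure r {x} = 0 := by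
  rw [expMeasure_eq', withDensity_apply _ (measurableSet_singleton x),
    setLIntegral_measure_zero _ _ (by simp)]

lemma expMeasure_Iio_zero' {r : ℝ} : expMeasure r (Iio 0) = 0 := by
  rw [expMeasure_eq', withDensity_apply _ measurableSet_Iio]
  exact lintegral_exponentialPDF_of_nonpos le_rfl

lemma expMeasure_Ici' {r : ℝ} (hr : 0 < r) {t : ℝ} (ht : 0 ≤ t) :
    expMeasure r (Ici t) = ENNReal.ofReal (rexp (-(r * t))) := by
  haveI := isProbabilityMeasure_expMeasure hr
  have h1 : expMeasure r (Iio t) = ENNReal.ofReal (1 - rexp (-(r * t))) := by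
    rw [← Iic_diff_right, measure_diff_null (expMeasure_singleton' r t), expMeasure_Iic' hr,
      if_pos ht]
  rw [← compl_Iio, measure_compl measurableSet_Iio (measure_ne_top _ _), measure_univ, h1]
  have he : rexp (-(r * t)) ≤ 1 := by
    rw [Real.exp_le_one_iff]
    nlinarith
  rw [show (1 : ℝ≥0∞) = ENNReal.ofReal 1 from ENNReal.ofReal_one.symm,
    ← ENNReal.ofReal_sub _ (by linarith), sub_sub_cancel]

lemma expMeasure_Ioi' {r : ℝ} (hr : 0 < r) {t : ℝ} (ht : 0 ≤ t) :
    expMeasure r (Ioi t) = ENNReal.ofReal (rexp (-(r * t))) := by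
  rw [← Ici_sdiff_left, measure_diff_null (expMeasure_singleton' r t), expMeasure_Ici' hr ht]

lemma map_const_mul_expMeasure {r c : ℝ} (hr : 0 < r) (hc : 0 < c) :
    Measure.map (fun y => c * y) (expMeasure r) = expMeasure (r / c) := by
  haveI := isProbabilityMeasure_expMeasure hr
  haveI := isProbabilityMeasure_expMeasure (show 0 < r / c by positivity)
  have hmm : Measurable fun y : ℝ => c * y := measurable_const_mul c
  haveI : IsProbabilityMeasure (Measure.map (fun y => c * y) (expMeasure r)) :=
    Measure.isProbabilityMeasure_map hmm.aemeasurable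
  refine Measure.ext_of_Iic _ _ fun a => ?_
  rw [Measure.map_apply hmm measurableSet_Iic]
  have hpre : (fun y : ℝ => c * y) ⁻¹' Iic a = Iic (a / c) := by
    ext y
    simp only [Set.mem_preimage, Set.mem_Iic]
    rw [le_div_iff₀ hc, mul_comm]
  rw [hpre, expMeasure_Iic' hr, expMeasure_Iic' (by positivity)]
  have hiff : 0 ≤ a / c ↔ 0 ≤ a := by rw [le_div_iff₀ hc, zero_mul]
  have harg : r * (a / c) = r / c * a := by field_simp
  rw [harg, if_congr hiff rfl rfl]


lemma expPDFReal_eq (r x : ℝ) :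
    exponentialPDFReal r x = if 0 ≤ x then r * rexp (-(r * x)) else 0 := by
  rw [exponentialPDFReal, gammaPDFReal]
  simp only [rpow_one, Real.Gamma_one, div_one, sub_self, rpow_zero, mul_one]

lemma exp_rv_ae_nonneg {Ω : Type*} [MeasureSpace Ω] {f : Ω → ℝ} {r : ℝ}
    (hf : Measurable f) (h : Measure.map f ℙ = expMeasure r) : ∀ᵐ ω ∂(ℙ : Measure Ω), 0 ≤ f ω := by
  have h0 : ℙ {ω | f ω < 0} = 0 := by
    have he : {ω | f ω < 0} = f ⁻¹' Iio 0 := rfl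
    rw [he, ← Measure.map_apply hf measurableSet_Iio, h, expMeasure_Iio_zero']
  rw [ae_iff]
  simpa [not_le] using h0

lemma event_prob_pos {Ω : Type*} [MeasureSpace Ω] [IsProbabilityMeasure (ℙ : Measure Ω)]
    {n : ℕ} (X : Fin n → Ω → ℝ) (r : Fin n → ℝ) (hr : ∀ j, 0 < r j)
    (hm : ∀ j, Measurable (X j)) (hindep : iIndepFun X ℙ)
    (hdist : ∀ j, Measure.map (X j) ℙ = expMeasure (r j))
    (s : Finset (Fin n)) (hs : s.Nonempty) (u : ℝ) :
    0 < ℙ {ω | u ≤ ∑ j ∈ s, X j ω} := by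
  set c := max u 1 with hc
  have hc1 : (1 : ℝ) ≤ c := le_max_right _ _
  have hcu : u ≤ c := le_max_left _ _
  have hsub : (⋂ j ∈ s, X j ⁻¹' Ici c) ⊆ {ω | u ≤ ∑ j ∈ s, X j ω} := by
    intro ω hω
    simp only [Set.mem_iInter, Set.mem_preimage, Set.mem_Ici] at hω
    obtain ⟨a, ha⟩ := hs
    have hsum : X a ω ≤ ∑ j ∈ s, X j ω :=
      Finset.single_le_sum (f := fun j => X j ω) (fun j hj => by linarith [hω j hj]) ha
    have := hω a ha
    simp only [Set.mem_setOf_eq]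
    linarith
  refine lt_of_lt_of_le ?_ (measure_mono hsub)
  rw [hindep.measure_inter_preimage_eq_mul s (sets := fun _ => Ici c)
    (fun i _ => measurableSet_Ici)]
  rw [pos_iff_ne_zero, Finset.prod_ne_zero_iff]
  intro j hj
  rw [← Measure.map_apply (hm j) measurableSet_Ici, hdist j,
    expMeasure_Ici' (hr j) (by linarith : (0:ℝ) ≤ c)]
  exact (ENNReal.ofReal_pos.2 (Real.exp_pos _)).ne'

lemma event_prob_one {Ω : Type*} [MeasureSpace Ω] [IsProbabilityMeasure (ℙ : Measure Ω)]
    {n : ℕ} (X : Fin n → Ω → ℝ) (r : Fin n → ℝ)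
    (hm : ∀ j, Measurable (X j))
    (hdist : ∀ j, Measure.map (X j) ℙ = expMeasure (r j))
    (s : Finset (Fin n)) {u : ℝ} (hu : u < 0) :
    ℙ {ω | u ≤ ∑ j ∈ s, X j ω} = 1 := by
  have hae : ∀ᵐ ω ∂(ℙ : Measure Ω), 0 ≤ ∑ j ∈ s, X j ω := by
    have h1 : ∀ᵐ ω ∂(ℙ : Measure Ω), ∀ j, 0 ≤ X j ω :=
      (ae_all_iff).2 fun j => exp_rv_ae_nonneg (hm j) (hdist j)
    filter_upwards [h1] with ω hω
    exact Finset.sum_nonneg fun j _ => hω j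
  have hms : MeasurableSet {ω | u ≤ ∑ j ∈ s, X j ω} :=
    measurableSet_le measurable_const (Finset.measurable_sum s fun j _ => hm j)
  have hc : ℙ {ω | u ≤ ∑ j ∈ s, X j ω}ᶜ = 0 := by
    refine measure_mono_null ?_ (ae_iff.1 hae)
    intro ω hω
    simp only [Set.mem_compl_iff, Set.mem_setOf_eq, not_le] at *
    linarith
  exact (prob_compl_eq_zero_iff hms).1 hc

lemma survival_formula {Ω : Type*} [MeasureSpace Ω] [IsProbabilityMeasure (ℙ : Measure Ω)]
    {n : ℕ} (X : Fin n → Ω → ℝ) (r : Fin n → ℝ) (hr : ∀ j, 0 < r j)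
    (hm : ∀ j, Measurable (X j)) (hindep : iIndepFun X ℙ)
    (hdist : ∀ j, Measure.map (X j) ℙ = expMeasure (r j)) (hinj : Function.Injective r)
    (s : Finset (Fin n)) (hs : s.Nonempty) :
    ∀ t : ℝ, 0 ≤ t →
      ℙ {ω | t ≤ ∑ j ∈ s, X j ω}
        = ENNReal.ofReal (∑ k ∈ s, (∏ l ∈ s.erase k, r l / (r l - r k)) * rexp (-(r k * t))) := by
  induction hs using Finset.Nonempty.cons_induction with
  | singleton a =>
    intro t ht
    have hev : {ω | t ≤ ∑ j ∈ ({a} : Finset (Fin n)), X j ω} = X a ⁻¹' Ici t := by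
      ext ω; simp [Finset.sum_singleton, Set.mem_Ici]
    rw [hev, ← Measure.map_apply (hm a) measurableSet_Ici, hdist a, expMeasure_Ici' (hr a) ht]
    simp
  | cons i s hi hs ih =>
    intro t ht
    classical
    set W : ℝ → ℝ := fun u => ∑ k ∈ s, (∏ l ∈ s.erase k, r l / (r l - r k)) * rexp (-(r k * u))
      with hW
    set S : Ω → ℝ := fun ω => ∑ j ∈ s, X j ω with hSdef
    have hSm : Measurable S := Finset.measurable_sum s fun j _ => hm j
    have hfun : (∑ j ∈ s, X j) = S := by funext ω; simp [hSdef, Finset.sum_apply]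
    have hIndep : IndepFun (X i) S ℙ := by
      have h := hindep.indepFun_finsetSum_of_notMem hm hi
      rw [hfun] at h
      exact h.symm
    have hmap : Measure.map (fun ω => (X i ω, S ω)) ℙ
        = (Measure.map (X i) ℙ).prod (Measure.map S ℙ) :=
      (indepFun_iff_map_prod_eq_prod_map_map (hm i).aemeasurable hSm.aemeasurable).mp hIndep
    have hν : ∀ u : ℝ, (Measure.map S ℙ) (Ici u) = ℙ {ω | u ≤ S ω} := fun u => by
      rw [Measure.map_apply hSm measurableSet_Ici]
      rfl
    have hν1 : ∀ u : ℝ, u < 0 → (Measure.map S ℙ) (Ici u) = 1 := fun u hu => by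
      rw [hν u]
      simpa [hSdef] using event_prob_one X r hm hdist s hu
    have hν2 : ∀ u : ℝ, 0 ≤ u → (Measure.map S ℙ) (Ici u) = ENNReal.ofReal (W u) :=
      fun u hu => by
      rw [hν u, hW]
      simpa [hSdef] using ih u hu
    have hWpos : ∀ u : ℝ, 0 ≤ u → 0 < W u := fun u hu => by
      have h0 := event_prob_pos X r hr hm hindep hdist s hs u
      rw [ih u hu] at h0
      exact ENNReal.ofReal_pos.mp h0
    have hev : {ω | t ≤ ∑ j ∈ Finset.cons i s hi, X j ω}
        = (fun ω => (X i ω, S ω)) ⁻¹' {p : ℝ × ℝ | t ≤ p.1 + p.2} := by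
      ext ω
      simp [Finset.sum_cons, Finset.sum_insert hi, hSdef]
    have hsetm : MeasurableSet {p : ℝ × ℝ | t ≤ p.1 + p.2} :=
      measurableSet_le measurable_const (measurable_fst.add measurable_snd)
    rw [hev, ← Measure.map_apply ((hm i).prodMk hSm) hsetm, hmap, Measure.prod_apply hsetm]
    have hpre : ∀ x : ℝ, (Prod.mk x ⁻¹' {p : ℝ × ℝ | t ≤ p.1 + p.2}) = Ici (t - x) := by
      intro x
      ext y
      simp only [Set.mem_preimage, Set.mem_setOf_eq, Set.mem_Ici]
      constructor <;> intro h <;> linarith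
    simp_rw [hpre]
    have hpdfm : Measurable (exponentialPDF (r i)) :=
      (measurable_exponentialPDFReal (r i)).ennreal_ofReal
    rw [hdist i, expMeasure_eq',
      lintegral_withDensity_eq_lintegral_mul_non_measurable _
        hpdfm (ae_of_all _ fun x => ENNReal.ofReal_lt_top)]
    simp only [Pi.mul_apply]
    rw [← lintegral_add_compl
      (fun x => exponentialPDF (r i) x * (Measure.map S ℙ) (Ici (t - x)))
      (measurableSet_Iic (a := t)), compl_Iic]
    -- part 2
    have hpart2 : ∫⁻ x in Ioi t, exponentialPDF (r i) x * (Measure.map S ℙ) (Ici (t - x))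
        = ENNReal.ofReal (rexp (-(r i * t))) := by
      have hc : ∀ x ∈ Ioi t, exponentialPDF (r i) x * (Measure.map S ℙ) (Ici (t - x))
          = exponentialPDF (r i) x := by
        intro x hx
        rw [hν1 (t - x) (by simp only [Set.mem_Ioi] at hx; linarith), mul_one]
      rw [setLIntegral_congr_fun measurableSet_Ioi hc,
        ← withDensity_apply _ measurableSet_Ioi, ← expMeasure_eq', expMeasure_Ioi' (hr i) ht]
    -- part 1
    have hWnn : ∀ x ∈ Iic t, 0 ≤ exponentialPDFReal (r i) x * W (t - x) := fun x hx =>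
      mul_nonneg (exponentialPDFReal_nonneg (hr i) x)
        (hWpos (t - x) (by simp only [Set.mem_Iic] at hx; linarith)).le
    have hcontW : Continuous W := by
      rw [hW]
      exact continuous_finset_sum s fun k _ => continuous_const.mul
        (Real.continuous_exp.comp (continuous_const.mul continuous_id).neg)
    have hsplitset : Set.Iic t = Set.Iio 0 ∪ Set.Icc 0 t := by
      ext y
      simp only [Set.mem_Iic, Set.mem_union, Set.mem_Iio, Set.mem_Icc]
      constructor
      · intro h
        rcases lt_or_ge y 0 with h' | h'
        · exact Or.inl h'
        · exact Or.inr ⟨h', h⟩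
      · rintro (h | ⟨h1, h2⟩) <;> linarith
    have hzeroIio : EqOn (fun x => exponentialPDFReal (r i) x * W (t - x)) (fun _ => (0:ℝ))
        (Iio 0) := by
      intro x hx
      simp only [Set.mem_Iio] at hx
      simp [expPDFReal_eq, not_le.2 hx]
    have hEqIcc : EqOn (fun x => exponentialPDFReal (r i) x * W (t - x))
        (fun x => (r i * rexp (-(r i * x))) * W (t - x)) (Icc 0 t) := by
      intro x hx
      simp only [Set.mem_Icc] at hx
      simp [expPDFReal_eq, hx.1]
    have hcontg : Continuous fun x => (r i * rexp (-(r i * x))) * W (t - x) :=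
      (continuous_const.mul (Real.continuous_exp.comp
        (continuous_const.mul continuous_id).neg)).mul
        (hcontW.comp (continuous_const.sub continuous_id))
    have hint1 : IntegrableOn (fun x => exponentialPDFReal (r i) x * W (t - x)) (Iio 0) :=
      (integrableOn_congr_fun hzeroIio measurableSet_Iio).2 integrableOn_zero
    have hint2 : IntegrableOn (fun x => exponentialPDFReal (r i) x * W (t - x)) (Icc 0 t) :=
      (integrableOn_congr_fun hEqIcc measurableSet_Icc).2 hcontg.integrableOn_Icc
    have hint : IntegrableOn (fun x => exponentialPDFReal (r i) x * W (t - x)) (Iic t) := by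
      rw [hsplitset]
      exact hint1.union hint2
    have hpart1 : ∫⁻ x in Iic t, exponentialPDF (r i) x * (Measure.map S ℙ) (Ici (t - x))
        = ENNReal.ofReal (∫ x in Iic t, exponentialPDFReal (r i) x * W (t - x)) := by
      have hcong : ∀ x ∈ Iic t, exponentialPDF (r i) x * (Measure.map S ℙ) (Ici (t - x))
          = ENNReal.ofReal (exponentialPDFReal (r i) x * W (t - x)) := by
        intro x hx
        simp only [Set.mem_Iic] at hx
        rw [hν2 (t - x) (by linarith), exponentialPDF,
          ← ENNReal.ofReal_mul (exponentialPDFReal_nonneg (hr i) x)]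
      rw [setLIntegral_congr_fun measurableSet_Iic hcong,
        ← ofReal_integral_eq_lintegral_ofReal hint
          ((ae_restrict_iff' measurableSet_Iic).2 (ae_of_all _ hWnn))]
    have hIcalc : ∫ x in Iic t, exponentialPDFReal (r i) x * W (t - x)
        = ∑ k ∈ s, (∏ l ∈ s.erase k, r l / (r l - r k))
            * (r i * (rexp (-(r i * t)) - rexp (-(r k * t))) / (r k - r i)) := by
      have hdisj : Disjoint (Iio (0:ℝ)) (Icc 0 t) := by
        rw [Set.disjoint_left]
        intro x hx hx2
        exact absurd hx2.1 (not_le.2 hx)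
      rw [hsplitset, setIntegral_union hdisj measurableSet_Icc hint1 hint2,
        setIntegral_congr_fun measurableSet_Iio hzeroIio, integral_zero, zero_add,
        setIntegral_congr_fun measurableSet_Icc hEqIcc, integral_Icc_eq_integral_Ioc,
        ← intervalIntegral.integral_of_le ht]
      have hexpand : ∀ x : ℝ, (r i * rexp (-(r i * x))) * W (t - x)
          = ∑ k ∈ s, (∏ l ∈ s.erase k, r l / (r l - r k))
              * ((r i * rexp (-(r k * t))) * rexp ((r k - r i) * x)) := by
        intro x
        simp only [hW]
        rw [Finset.mul_sum]
        refine Finset.sum_congr rfl fun k hk => ?_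
        have hE : rexp (-(r i * x)) * rexp (-(r k * (t - x)))
            = rexp (-(r k * t)) * rexp ((r k - r i) * x) := by
          rw [← Real.exp_add, ← Real.exp_add]
          congr 1
          ring
        linear_combination ((∏ l ∈ s.erase k, r l / (r l - r k)) * r i) * hE
      simp_rw [hexpand]
      have hII : ∀ k ∈ s, IntervalIntegrable
          (fun x => (∏ l ∈ s.erase k, r l / (r l - r k))
            * ((r i * rexp (-(r k * t))) * rexp ((r k - r i) * x))) volume 0 t := by
        intro k _
        apply Continuous.intervalIntegrable
        fun_prop
      rw [intervalIntegral.integral_finset_sum hII]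
      refine Finset.sum_congr rfl fun k hk => ?_
      rw [intervalIntegral.integral_const_mul, intervalIntegral.integral_const_mul]
      have hne : r k - r i ≠ 0 := sub_ne_zero.2 fun h => hi (hinj h ▸ hk)
      have hexpint : ∫ x in (0:ℝ)..t, rexp ((r k - r i) * x)
          = (rexp ((r k - r i) * t) - 1) / (r k - r i) := by
        rw [intervalIntegral.integral_comp_mul_left rexp hne, mul_zero, integral_exp,
          Real.exp_zero, smul_eq_mul]
        ring
      rw [hexpint]
      congr 1
      have hE : rexp (-(r k * t)) * rexp ((r k - r i) * t) = rexp (-(r i * t)) := by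
        rw [← Real.exp_add]
        congr 1
        ring
      field_simp
      rw [mul_comm t (r k - r i)]
      linear_combination (r i) * hE
    -- coefficient identities
    have hinjOn : Set.InjOn r ↑s := fun a _ b _ h => hinj h
    have h1 : ∑ k ∈ s, (∏ l ∈ s.erase k, r l / (r l - r k)) = 1 := by
      calc ∑ k ∈ s, (∏ l ∈ s.erase k, r l / (r l - r k))
          = ∑ k ∈ s, (∏ l ∈ s.erase k, r l / (r l - r k)) * (r k / (r k - 0)) :=
            Finset.sum_congr rfl fun k _ => by
              rw [sub_zero, div_self (hr k).ne', mul_one]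
        _ = ∏ l ∈ s, r l / (r l - 0) :=
            lagrange_c_mul hs r hinjOn 0 fun l _ => (hr l).ne'
        _ = 1 := Finset.prod_eq_one fun l _ => by rw [sub_zero, div_self (hr l).ne']
    have h2 : ∑ k ∈ s, (∏ l ∈ s.erase k, r l / (r l - r k)) * (r k / (r k - r i))
        = ∏ l ∈ s, r l / (r l - r i) :=
      lagrange_c_mul hs r hinjOn (r i) fun l hl h => hi (hinj h ▸ hl)
    have hcoef : ∑ k ∈ s, (∏ l ∈ s.erase k, r l / (r l - r k)) * (r i / (r k - r i)) + 1
        = ∏ l ∈ s, r l / (r l - r i) := by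
      rw [← h2]
      nth_rewrite 1 [← h1]
      rw [← Finset.sum_add_distrib]
      refine Finset.sum_congr rfl fun k hk => ?_
      have hne : r k - r i ≠ 0 := sub_ne_zero.2 fun h => hi (hinj h ▸ hk)
      have hx : r i / (r k - r i) + 1 = r k / (r k - r i) := by
        field_simp
        ring
      linear_combination (∏ l ∈ s.erase k, r l / (r l - r k)) * hx
    rw [hpart1, hpart2,
      ← ENNReal.ofReal_add (setIntegral_nonneg measurableSet_Iic hWnn) (Real.exp_pos _).le]
    congr 1
    rw [hIcalc]
    simp only [Finset.cons_eq_insert]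
    rw [Finset.sum_insert hi, Finset.erase_insert hi]
    have hterm : ∀ k ∈ s, (∏ l ∈ (insert i s).erase k, r l / (r l - r k)) * rexp (-(r k * t))
        = (r i / (r i - r k)) * ((∏ l ∈ s.erase k, r l / (r l - r k)) * rexp (-(r k * t))) := by
      intro k hk
      have hik : i ≠ k := fun h => hi (h ▸ hk)
      rw [Finset.erase_insert_of_ne hik,
        Finset.prod_insert (fun h => hi (Finset.mem_of_mem_erase h)), mul_assoc]
    rw [Finset.sum_congr rfl hterm]
    have hsplit2 : ∀ k ∈ s, (∏ l ∈ s.erase k, r l / (r l - r k))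
          * (r i * (rexp (-(r i * t)) - rexp (-(r k * t))) / (r k - r i))
        = (∏ l ∈ s.erase k, r l / (r l - r k)) * (r i / (r k - r i)) * rexp (-(r i * t))
          + (r i / (r i - r k)) * ((∏ l ∈ s.erase k, r l / (r l - r k)) * rexp (-(r k * t))) := by
      intro k hk
      have hne : r k - r i ≠ 0 := sub_ne_zero.2 fun h => hi (hinj h ▸ hk)
      have hne' : r i - r k ≠ 0 := sub_ne_zero.2 fun h => hi (by rw [hinj h]; exact hk)
      have hx : r i * (rexp (-(r i * t)) - rexp (-(r k * t))) / (r k - r i)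
          = (r i / (r k - r i)) * rexp (-(r i * t))
            + (r i / (r i - r k)) * rexp (-(r k * t)) := by
        field_simp
        ring
      linear_combination (∏ l ∈ s.erase k, r l / (r l - r k)) * hx
    rw [Finset.sum_congr rfl hsplit2, Finset.sum_add_distrib]
    have hfact : ∑ k ∈ s, (∏ l ∈ s.erase k, r l / (r l - r k)) * (r i / (r k - r i))
          * rexp (-(r i * t))
        = (∑ k ∈ s, (∏ l ∈ s.erase k, r l / (r l - r k)) * (r i / (r k - r i)))
          * rexp (-(r i * t)) := by
      rw [Finset.sum_mul]
    rw [hfact, ← hcoef]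
    ring

/-- Theorem 3: deterministic robust counterpart of the chance constraint under
exponentially distributed perturbations. -/
theorem stmt_9 {Ω : Type*} [MeasureSpace Ω] [IsProbabilityMeasure (ℙ : Measure Ω)]
    (n : ℕ) (hn : 2 ≤ n) (ζ : Fin n → Ω → ℝ) (lam : Fin n → ℝ)
    (hlam : ∀ j, 0 < lam j)
    (hmeas : ∀ j, Measurable (ζ j))
    (hindep : iIndepFun ζ ℙ)
    (hdist : ∀ j, Measure.map (ζ j) ℙ = expMeasure (lam j))
    (μ₀ μ x : Fin n → ℝ) (τ : ℝ)
    (hpos : ∀ j, 0 < μ j * x j)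
    (hdistinct : ∀ k l, k ≠ l → lam k / (μ k * x k) ≠ lam l / (μ l * x l))
    (β : ℝ) (hβ : β ∈ Set.Ioo (0 : ℝ) 1)
    (hτ : 0 ≤ τ - ∑ j, μ₀ j * x j) :
    ENNReal.ofReal β ≤ ℙ {ω | τ ≤ ∑ j, (μ₀ j + ζ j ω * μ j) * x j}
      ↔ (∏ j, lam j) * ∑ k, (μ k * x k) ^ (n - 1)
            * (Real.exp (-(lam k) * (τ - ∑ j, μ₀ j * x j) / (μ k * x k)) - 1)
            / (-(lam k) * ∏ l ∈ Finset.univ.erase k,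
                (μ k * x k * lam l - μ l * x l * lam k))
          ≤ 1 - β := by
  obtain ⟨hβ0, hβ1⟩ := hβ
  haveI : NeZero n := ⟨by omega⟩
  set t : ℝ := τ - ∑ j, μ₀ j * x j with htdef
  set X : Fin n → Ω → ℝ := fun j ω => μ j * x j * ζ j ω with hX
  set r : Fin n → ℝ := fun j => lam j / (μ j * x j) with hrdef
  have hr : ∀ j, 0 < r j := fun j => div_pos (hlam j) (hpos j)
  have hXm : ∀ j, Measurable (X j) := fun j => (hmeas j).const_mul (μ j * x j)
  have hXindep : iIndepFun X ℙ :=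
    hindep.comp (fun j y => μ j * x j * y) (fun j => measurable_const_mul (μ j * x j))
  have hXdist : ∀ j, Measure.map (X j) ℙ = expMeasure (r j) := fun j => by
    have hc : Measurable fun y : ℝ => μ j * x j * y := measurable_const_mul (μ j * x j)
    have hcomp : X j = (fun y => μ j * x j * y) ∘ ζ j := rfl
    rw [hcomp, ← Measure.map_map hc (hmeas j), hdist j,
      map_const_mul_expMeasure (hlam j) (hpos j)]
  have hrinj : Function.Injective r := fun k l h => by
    by_contra hne
    exact hdistinct k l hne h
  have huniv : (Finset.univ : Finset (Fin n)).Nonempty := Finset.univ_nonempty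
  have hev : {ω | τ ≤ ∑ j, (μ₀ j + ζ j ω * μ j) * x j} = {ω | t ≤ ∑ j, X j ω} := by
    ext ω
    simp only [Set.mem_setOf_eq]
    have hsum : ∑ j, (μ₀ j + ζ j ω * μ j) * x j
        = (∑ j, μ₀ j * x j) + ∑ j, X j ω := by
      rw [← Finset.sum_add_distrib]
      refine Finset.sum_congr rfl fun j _ => ?_
      simp only [hX]
      ring
    rw [hsum, htdef]
    constructor <;> intro h <;> linarith
  have hkey := survival_formula X r hr hXm hXindep hXdist hrinj Finset.univ huniv t hτ
  rw [hev, hkey]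
  set V : ℝ := ∑ k, (∏ l ∈ Finset.univ.erase k, r l / (r l - r k)) * rexp (-(r k * t)) with hV
  have hVpos : 0 < V := by
    have h0 := event_prob_pos X r hr hXm hXindep hXdist Finset.univ huniv t
    rw [hkey] at h0
    exact ENNReal.ofReal_pos.mp h0
  have hinjOn : Set.InjOn r ↑(Finset.univ : Finset (Fin n)) := fun a _ b _ h => hrinj h
  have hsum1 : ∑ k, (∏ l ∈ Finset.univ.erase k, r l / (r l - r k)) = 1 := by
    calc ∑ k, (∏ l ∈ Finset.univ.erase k, r l / (r l - r k))
        = ∑ k, (∏ l ∈ Finset.univ.erase k, r l / (r l - r k)) * (r k / (r k - 0)) :=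
          Finset.sum_congr rfl fun k _ => by
            rw [sub_zero, div_self (hr k).ne', mul_one]
      _ = ∏ l, r l / (r l - 0) :=
          lagrange_c_mul huniv r hinjOn 0 fun l _ => (hr l).ne'
      _ = 1 := Finset.prod_eq_one fun l _ => by rw [sub_zero, div_self (hr l).ne']
  have hRHS : (∏ j, lam j) * ∑ k, (μ k * x k) ^ (n - 1)
        * (Real.exp (-(lam k) * t / (μ k * x k)) - 1)
        / (-(lam k) * ∏ l ∈ Finset.univ.erase k, (μ k * x k * lam l - μ l * x l * lam k))
      = 1 - V := by
    rw [hV]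
    nth_rewrite 2 [← hsum1]
    rw [Finset.mul_sum, ← Finset.sum_sub_distrib]
    refine Finset.sum_congr rfl fun k _ => ?_
    have hD : ∀ l ∈ Finset.univ.erase k, μ k * x k * lam l - μ l * x l * lam k ≠ 0 := by
      intro l hl h
      have hrlk : r l ≠ r k := fun hh => (Finset.ne_of_mem_erase hl) (hrinj hh)
      apply hrlk
      have h' := sub_eq_zero.mp h
      simp only [hrdef]
      rw [div_eq_div_iff (hpos l).ne' (hpos k).ne']
      linear_combination h'
    have hcprod : (∏ l ∈ Finset.univ.erase k, r l / (r l - r k))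
        = (∏ l ∈ Finset.univ.erase k, lam l) * (μ k * x k) ^ (n - 1)
          / ∏ l ∈ Finset.univ.erase k, (μ k * x k * lam l - μ l * x l * lam k) := by
      have hcard : (Finset.univ.erase k).card = n - 1 := by
        rw [Finset.card_erase_of_mem (Finset.mem_univ k), Finset.card_univ, Fintype.card_fin]
      rw [← hcard, ← Finset.prod_const (μ k * x k), ← Finset.prod_mul_distrib,
        ← Finset.prod_div_distrib]
      refine Finset.prod_congr rfl fun l hl => ?_
      have hrlk : r l ≠ r k := fun hh => (Finset.ne_of_mem_erase hl) (hrinj hh)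
      have hsub : r l - r k ≠ 0 := sub_ne_zero.2 hrlk
      have hDl := hD l hl
      have hsub' : lam l / (μ l * x l) - lam k / (μ k * x k)
          = (μ k * x k * lam l - μ l * x l * lam k) / ((μ l * x l) * (μ k * x k)) := by
        rw [div_sub_div _ _ (hpos l).ne' (hpos k).ne']
        congr 1
        ring
      simp only [hrdef]
      rw [hsub', div_div_eq_mul_div]
      congr 1
      rw [← mul_assoc, div_mul_cancel₀ _ (hpos l).ne']
    rw [hcprod]
    have hQ : (∏ l ∈ Finset.univ.erase k, (μ k * x k * lam l - μ l * x l * lam k)) ≠ 0 :=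
      Finset.prod_ne_zero_iff.2 hD
    have hlamprod : (∏ j, lam j) = lam k * ∏ l ∈ Finset.univ.erase k, lam l :=
      (Finset.mul_prod_erase Finset.univ lam (Finset.mem_univ k)).symm
    have hEeq : Real.exp (-(lam k) * t / (μ k * x k)) = rexp (-(r k * t)) := by
      simp only [hrdef]
      congr 1
      ring
    rw [hEeq, hlamprod]
    have hlk : lam k ≠ 0 := (hlam k).ne'
    field_simp [hQ, hlk]
    ring
  rw [ENNReal.ofReal_le_ofReal_iff hVpos.le, hRHS]
  constructor <;> intro h <;> linarith
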